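/- arXiv:2602.09559 — 7 statements merged into one kernel-verified Lean document; each statement's English description precedes it below -/
import Mathlib

section
/- Let R be an associative (not necessarily unital) algebra over a commutative ring F and let (σ,s) be a homothetic datum on R, i.e. σ = (⃖σ, ⃗σ) is a double homothetism and s ∈ R satisfies σs = sσ and σ² = σ + s̄ (where s̄ is the inner bimultiplication by s). Then the F-module R ⊕ F with multiplication (a,ξ)(b,ζ) = (ab + ζ(aσ) + ξ(σb) + ξζs, ξζ) is an associative algebra. -/
/-- The multiplication on the homothetic extension `R(σ,s) = R ⊕ F`:
`(a,ξ)(b,ζ) = (ab + ζ(aσ) + ξ(σb) + ξζ s, ξζ)`, where `l a = aσ` and `r b = σb`. -/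
def homMul {F R : Type*} [CommRing F] [NonUnitalRing R] [Module F R]
    (l r : R → R) (s : R) (x y : R × F) : R × F :=
  (x.1 * y.1 + y.2 • l x.1 + x.2 • r y.1 + (x.2 * y.2) • s, x.2 * y.2)

/-! Both bracketings of `(a,ξ)(b,ζ)(c,η)` have `F`-component `ξζη`; their `R`-components expand
into `abc` plus one term per monomial in `ξ, ζ, η`, and each pair of corresponding terms is matched
by exactly one axiom of a homothetic datum: the three bimultiplication laws for the linear
monomials, `σ(aσ) = (σa)σ` and the two halves of `σ² = σ + s̄` for the quadratic ones, and
`σs = sσ` for `ξζη`. -/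

section HomotheticExtension

variable {F R : Type*} [CommRing F] [NonUnitalRing R] [Module F R] (l r : R →ₗ[F] R) (s : R)

theorem homMul_add_left (x y z : R × F) :
    homMul l r s (x + y) z = homMul l r s x z + homMul l r s y z := by
  ext
  · simp only [homMul, Prod.fst_add, Prod.snd_add, add_mul, map_add]
    module
  · exact add_mul ..

theorem homMul_add_right (x y z : R × F) :
    homMul l r s x (y + z) = homMul l r s x y + homMul l r s x z := by
  ext
  · simp only [homMul, Prod.fst_add, Prod.snd_add, mul_add, map_add]
    module
  · exact mul_add ..

theorem homMul_smul_left [IsScalarTower F R R] (c : F) (x y : R × F) :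
    homMul l r s (c • x) y = c • homMul l r s x y := by
  ext
  · simp only [homMul, Prod.smul_fst, Prod.smul_snd, smul_eq_mul, map_smul, smul_mul_assoc]
    module
  · exact mul_assoc ..

theorem homMul_smul_right [SMulCommClass F R R] (c : F) (x y : R × F) :
    homMul l r s x (c • y) = c • homMul l r s x y := by
  ext
  · simp only [homMul, Prod.smul_fst, Prod.smul_snd, smul_eq_mul, map_smul, mul_smul_comm]
    module
  · exact mul_left_comm ..

structure IsHomotheticDatum : Prop where
  r_mul : ∀ a b, r (a * b) = r a * b
  l_mul : ∀ a b, l (a * b) = a * l b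
  mul_r : ∀ a b, a * r b = l a * b
  r_comp_l : ∀ a, r (l a) = l (r a)
  r_s : r s = l s
  r_r : ∀ a, r (r a) = r a + s * a
  l_l : ∀ a, l (l a) = l a + a * s

theorem IsHomotheticDatum.homMul_assoc [SMulCommClass F R R] [IsScalarTower F R R]
    {l r : R →ₗ[F] R} {s : R} (h : IsHomotheticDatum l r s) (x y z : R × F) :
    homMul l r s (homMul l r s x y) z = homMul l r s x (homMul l r s y z) := by
  ext
  · simp only [homMul, mul_add, add_mul, map_add, map_smul, smul_add, smul_mul_assoc,
      mul_smul_comm, mul_assoc, h.r_mul, h.l_mul, h.mul_r, h.r_comp_l, h.r_s, h.r_r, h.l_l]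
    module
  · exact mul_assoc ..

end HomotheticExtension

/-- for a homothetic datum `(σ,s)` on an associative (not necessarily
unital) `F`-algebra `R`, the `F`-module `R ⊕ F` with the multiplication
`(a,ξ)(b,ζ) = (ab + ζ(aσ) + ξ(σb) + ξζ s, ξζ)` is an associative `F`-algebra. -/
theorem homothetic_extension_is_associative_algebra
    {F R : Type*} [CommRing F] [NonUnitalRing R] [Module F R]
    [SMulCommClass F R R] [IsScalarTower F R R]
    (l r : R → R) (s : R)
    (hladd : ∀ a b, l (a + b) = l a + l b)
    (hlsmul : ∀ (c : F) a, l (c • a) = c • l a)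
    (hradd : ∀ a b, r (a + b) = r a + r b)
    (hrsmul : ∀ (c : F) a, r (c • a) = c • r a)
    (hbm1 : ∀ a b, r (a * b) = r a * b)
    (hbm2 : ∀ a b, l (a * b) = a * l b)
    (hbm3 : ∀ a b, a * r b = l a * b)
    (hdh : ∀ a, r (l a) = l (r a))
    (hs : r s = l s)
    (hsq1 : ∀ a, r (r a) = r a + s * a)
    (hsq2 : ∀ a, l (l a) = l a + a * s) :
    (∀ x y z : R × F, homMul l r s (homMul l r s x y) z = homMul l r s x (homMul l r s y z)) ∧
    (∀ x y z : R × F, homMul l r s x (y + z) = homMul l r s x y + homMul l r s x z) ∧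
    (∀ x y z : R × F, homMul l r s (x + y) z = homMul l r s x z + homMul l r s y z) ∧
    (∀ (c : F) (x y : R × F), homMul l r s (c • x) y = c • homMul l r s x y) ∧
    (∀ (c : F) (x y : R × F), homMul l r s x (c • y) = c • homMul l r s x y) := by
  let σl : R →ₗ[F] R := IsLinearMap.mk' l ⟨hladd, hlsmul⟩
  let σr : R →ₗ[F] R := IsLinearMap.mk' r ⟨hradd, hrsmul⟩
  have hσ : IsHomotheticDatum σl σr s := ⟨hbm1, hbm2, hbm3, hdh, hs, hsq1, hsq2⟩
  exact ⟨hσ.homMul_assoc, homMul_add_right σl σr s, homMul_add_left σl σr s,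
    homMul_smul_left σl σr s, homMul_smul_right σl σr s⟩
end

section
/- Let (σ,s) be a homothetic datum on an F-algebra R with F a field (or ℤ) and let α_R be an algebra endomorphism of R. Define, for w ∈ R and ς ∈ F, the linear map α_S : R(σ,s) → R(σ,s) by α_S(a + ξ𝛔) = α_R(a) + ξw + ξς𝛔. Then α_S is an algebra endomorphism if and only if ς² = ς (hence ς = 0 or 1 when F is a field) and, for all a ∈ R: (i) α_R(s) − ςs = w² + ς(wσ) + ς(σw) − w; (ii) α_R(aσ) = α_R(a)w + ς(α_R(a)σ); (iii) α_R(σa) = wα_R(a) + ς(σα_R(a)). -/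
section HomotheticExtension

variable {F R : Type*} [CommRing F] [NonUnitalRing R] [Module F R]
  (l r : R →ₗ[F] R) (s : R) (α : R →ₙₐ[F] R) (w : R) (ς : F)

def extensionMap (z : R × F) : R × F :=
  (α z.1 + z.2 • w, z.2 * ς)

lemma fst_extensionMap_homMul (x y : R × F) :
    (extensionMap α w ς (homMul l r s x y)).1 =
      α (x.1 * y.1) + y.2 • α (l x.1) + x.2 • α (r y.1) + (x.2 * y.2) • (α s + w) := by
  simp only [extensionMap, homMul, map_add, map_smul]
  module

variable [SMulCommClass F R R] [IsScalarTower F R R]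

lemma fst_homMul_extensionMap (x y : R × F) :
    (homMul l r s (extensionMap α w ς x) (extensionMap α w ς y)).1 =
      α x.1 * α y.1 + y.2 • (α x.1 * w + ς • l (α x.1)) + x.2 • (w * α y.1 + ς • r (α y.1))
        + (x.2 * y.2) • (w * w + ς • l w + ς • r w + (ς * ς) • s) := by
  simp only [extensionMap, homMul, map_add, map_smul, mul_add, add_mul, smul_mul_assoc,
    mul_smul_comm, smul_add, smul_smul]
  module

theorem extensionMap_homMul_iff :
    (∀ x y : R × F, extensionMap α w ς (homMul l r s x y) =
        homMul l r s (extensionMap α w ς x) (extensionMap α w ς y)) ↔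
      IsIdempotentElem ς ∧
        α s - ς • s = w * w + ς • l w + ς • r w - w ∧
        (∀ a : R, α (l a) = α a * w + ς • l (α a)) ∧
        (∀ a : R, α (r a) = w * α a + ς • r (α a)) := by
  simp only [Prod.ext_iff, fst_extensionMap_homMul, fst_homMul_extensionMap]
  simp only [extensionMap, homMul]
  constructor
  · intro h
    obtain ⟨hs, hς⟩ := h (0, 1) (0, 1)
    have hidem : IsIdempotentElem ς := by simpa [IsIdempotentElem] using hς.symm
    refine ⟨hidem, ?_, fun a ↦ ?_, fun b ↦ ?_⟩
    · simp only [map_zero, mul_zero, zero_mul, smul_zero, add_zero, one_smul, zero_add, mul_one,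
        hidem.eq] at hs
      linear_combination (norm := module) hs
    · simpa using (h (a, 0) (0, 1)).1
    · simpa using (h (0, 1) (b, 0)).1
  · rintro ⟨hidem, hs, hl, hr⟩ x y
    refine ⟨?_, by linear_combination (x.2 * y.2) * hidem.symm⟩
    rw [map_mul, hl, hr, hidem.eq]
    linear_combination (norm := module) (x.2 * y.2) • hs

end HomotheticExtension

theorem endomorphism_extension_iff_general
    {F R : Type*} [Field F] [NonUnitalRing R] [Module F R]
    [SMulCommClass F R R] [IsScalarTower F R R]
    (l r : R → R) (s : R)
    (hladd : ∀ a b, l (a + b) = l a + l b)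
    (hlsmul : ∀ (c : F) a, l (c • a) = c • l a)
    (hradd : ∀ a b, r (a + b) = r a + r b)
    (hrsmul : ∀ (c : F) a, r (c • a) = c • r a)
    (αR : R → R)
    (hαadd : ∀ a b, αR (a + b) = αR a + αR b)
    (hαsmul : ∀ (c : F) a, αR (c • a) = c • αR a)
    (hαmul : ∀ a b, αR (a * b) = αR a * αR b)
    (w : R) (ς : F) :
    (∀ x y : R × F,
        (fun z : R × F => ((αR z.1 + z.2 • w, z.2 * ς) : R × F)) (homMul l r s x y)
          = homMul l r s ((fun z : R × F => ((αR z.1 + z.2 • w, z.2 * ς) : R × F)) x)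
              ((fun z : R × F => ((αR z.1 + z.2 • w, z.2 * ς) : R × F)) y))
      ↔ ((ς = 0 ∨ ς = 1) ∧
          (αR s - ς • s = w * w + ς • l w + ς • r w - w) ∧
          (∀ a : R, αR (l a) = αR a * w + ς • l (αR a)) ∧
          (∀ a : R, αR (r a) = w * αR a + ς • r (αR a))) := by
  let α : R →ₙₐ[F] R :=
    { toFun := αR
      map_add' := hαadd
      map_smul' := hαsmul
      map_zero' := by simpa using hαsmul 0 0
      map_mul' := hαmul }
  rw [← IsIdempotentElem.iff_eq_zero_or_one]
  exact extensionMap_homMul_iff (IsLinearMap.mk' l ⟨hladd, hlsmul⟩)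
    (IsLinearMap.mk' r ⟨hradd, hrsmul⟩) s α w ς

/-- the linear map `α_S(a + ξ𝛔) = α_R(a) + ξw + ξς𝛔` on `R(σ,s)` is an
algebra endomorphism if and only if `ς = 0` or `ς = 1` and, for all `a ∈ R`,
(i) `α_R(s) − ςs = w² + ς(wσ) + ς(σw) − w`, (ii) `α_R(aσ) = α_R(a)w + ς(α_R(a)σ)`,
(iii) `α_R(σa) = wα_R(a) + ς(σα_R(a))`. -/
theorem endomorphism_extension_iff
    {F R : Type*} [Field F] [NonUnitalRing R] [Module F R]
    [SMulCommClass F R R] [IsScalarTower F R R]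
    (l r : R → R) (s : R)
    (hladd : ∀ a b, l (a + b) = l a + l b)
    (hlsmul : ∀ (c : F) a, l (c • a) = c • l a)
    (hradd : ∀ a b, r (a + b) = r a + r b)
    (hrsmul : ∀ (c : F) a, r (c • a) = c • r a)
    (hbm1 : ∀ a b, r (a * b) = r a * b)
    (hbm2 : ∀ a b, l (a * b) = a * l b)
    (hbm3 : ∀ a b, a * r b = l a * b)
    (hdh : ∀ a, r (l a) = l (r a))
    (hs : r s = l s)
    (hsq1 : ∀ a, r (r a) = r a + s * a)
    (hsq2 : ∀ a, l (l a) = l a + a * s)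
    (αR : R → R)
    (hαadd : ∀ a b, αR (a + b) = αR a + αR b)
    (hαsmul : ∀ (c : F) a, αR (c • a) = c • αR a)
    (hαmul : ∀ a b, αR (a * b) = αR a * αR b)
    (w : R) (ς : F) :
    (∀ x y : R × F,
        (fun z : R × F => ((αR z.1 + z.2 • w, z.2 * ς) : R × F)) (homMul l r s x y)
          = homMul l r s ((fun z : R × F => ((αR z.1 + z.2 • w, z.2 * ς) : R × F)) x)
              ((fun z : R × F => ((αR z.1 + z.2 • w, z.2 * ς) : R × F)) y))
      ↔ ((ς = 0 ∨ ς = 1) ∧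
          (αR s - ς • s = w * w + ς • l w + ς • r w - w) ∧
          (∀ a : R, αR (l a) = αR a * w + ς • l (αR a)) ∧
          (∀ a : R, αR (r a) = w * αR a + ς • r (αR a))) :=
  endomorphism_extension_iff_general l r s hladd hlsmul hradd hrsmul αR hαadd hαsmul hαmul w ς
end

section
/- Let (σ,s) be a homothetic datum on an F-algebra R, let α_R be an algebra endomorphism of R and w ∈ R, ς ∈ {0,1} satisfy the conditions making α_S(a+ξ𝛔) = α_R(a)+ξw+ξς𝛔 an algebra endomorphism of R(σ,s). Let δ_R be an α_R-skew derivation of R. For e ∈ R and μ ∈ F, define δ_S : R(σ,s) → R(σ,s) by δ_S(a + ξ𝛔) = δ_R(a) + ξe + ξμ𝛔. Then δ_S is an α_S-skew derivation (i.e. δ_S(uv) = δ_S(u)v + α_S(u)δ_S(v)) if and only if ςμ = 0 and for all a ∈ R: (a) δ_R(s) − μs = eσ + ς(σe) + we + μ(wσ) − e; (b) δ_R(aσ) = δ_R(a)σ + α_R(a)e + μ(α_R(a)σ); (c) δ_R(σa) = wδ_R(a) + ς(σδ_R(a)) + ea + μ(σa). -/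
section SkewDerivationDefect

variable {F R : Type*} [CommRing F] [NonUnitalRing R] [Module F R]
    [SMulCommClass F R R] [IsScalarTower F R R]
    {l r : R → R} (s : R) (αR δR : R → R) (w e : R) (ς μ : F)

/-- The map `a + ξ𝛔 ↦ f(a) + ξv + ξν𝛔` of `R(σ,s)`, as in `α_S` and `δ_S`. -/
def extendMap (f : R → R) (v : R) (ν : F) (z : R × F) : R × F :=
  (f z.1 + z.2 • v, z.2 * ν)

theorem extendMap_skewDefect_eq
    (hladd : ∀ a b, l (a + b) = l a + l b) (hlsmul : ∀ (c : F) a, l (c • a) = c • l a)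
    (hradd : ∀ a b, r (a + b) = r a + r b) (hrsmul : ∀ (c : F) a, r (c • a) = c • r a)
    (hδadd : ∀ a b, δR (a + b) = δR a + δR b) (hδsmul : ∀ (c : F) a, δR (c • a) = c • δR a)
    (hδ : ∀ a b, δR (a * b) = δR a * b + αR a * δR b) (a : R) (ξ : F) (b : R) (η : F) :
    extendMap δR e μ (homMul l r s (a, ξ) (b, η))
        - (homMul l r s (extendMap δR e μ (a, ξ)) (b, η)
          + homMul l r s (extendMap αR w ς (a, ξ)) (extendMap δR e μ (b, η)))
      = (η • (δR (l a) - (l (δR a) + αR a * e + μ • l (αR a)))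
          + ξ • (δR (r b) - (w * δR b + ς • r (δR b) + e * b + μ • r b))
          + (ξ * η) • (δR s - μ • s - (l e + ς • r e + w * e + μ • l w - e))
          - (ξ * η * (ς * μ)) • s,
        -(ξ * η * (ς * μ))) := by
  simp only [extendMap, homMul, Prod.mk_add_mk, Prod.mk_sub_mk, hδadd, hδsmul, hδ, hladd,
    hlsmul, hradd, hrsmul, mul_add, add_mul, smul_mul_assoc, mul_smul_comm]
  refine Prod.ext ?_ ?_
  · module
  · ring

end SkewDerivationDefect

theorem skew_derivation_extension_iff_general
    {F R : Type*} [Field F] [NonUnitalRing R] [Module F R]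
    [SMulCommClass F R R] [IsScalarTower F R R]
    (l r : R → R) (s : R)
    (hladd : ∀ a b, l (a + b) = l a + l b)
    (hlsmul : ∀ (c : F) a, l (c • a) = c • l a)
    (hradd : ∀ a b, r (a + b) = r a + r b)
    (hrsmul : ∀ (c : F) a, r (c • a) = c • r a)
    (αR : R → R)
    (w : R) (ς : F)
    (δR : R → R)
    (hδadd : ∀ a b, δR (a + b) = δR a + δR b)
    (hδsmul : ∀ (c : F) a, δR (c • a) = c • δR a)
    (hδ : ∀ a b, δR (a * b) = δR a * b + αR a * δR b)
    (e : R) (μ : F) :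
    (∀ x y : R × F,
        (fun z : R × F => ((δR z.1 + z.2 • e, z.2 * μ) : R × F)) (homMul l r s x y)
          = homMul l r s ((fun z : R × F => ((δR z.1 + z.2 • e, z.2 * μ) : R × F)) x) y
            + homMul l r s ((fun z : R × F => ((αR z.1 + z.2 • w, z.2 * ς) : R × F)) x)
                ((fun z : R × F => ((δR z.1 + z.2 • e, z.2 * μ) : R × F)) y))
      ↔ (ς * μ = 0 ∧
          (δR s - μ • s = l e + ς • r e + w * e + μ • l w - e) ∧
          (∀ a : R, δR (l a) = l (δR a) + αR a * e + μ • l (αR a)) ∧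
          (∀ a : R, δR (r a) = w * δR a + ς • r (δR a) + e * a + μ • r a)) := by
  have defect := extendMap_skewDefect_eq s αR δR w e ς μ hladd hlsmul hradd hrsmul hδadd hδsmul hδ
  constructor
  · intro h
    have vanish a ξ b η := (defect a ξ b η).symm.trans (sub_eq_zero.mpr (h (a, ξ) (b, η)))
    have hb : ∀ a, δR (l a) = l (δR a) + αR a * e + μ • l (αR a) := fun a => by
      simpa [sub_eq_zero] using vanish a 0 0 1
    have hc : ∀ b, δR (r b) = w * δR b + ς • r (δR b) + e * b + μ • r b := fun b => by
      simpa [sub_eq_zero] using vanish 0 1 b 0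
    have hσσ := vanish 0 1 0 1
    simp only [one_smul, one_mul, hb, hc, sub_self, zero_add, Prod.mk_eq_zero,
      neg_eq_zero] at hσσ
    obtain ⟨ha, hςμ⟩ := hσσ
    rw [hςμ, zero_smul, sub_eq_zero, sub_eq_zero] at ha
    exact ⟨hςμ, ha, hb, hc⟩
  · rintro ⟨hςμ, ha, hb, hc⟩ ⟨a, ξ⟩ ⟨b, η⟩
    exact sub_eq_zero.mp ((defect a ξ b η).trans (by simp [hςμ, sub_eq_zero.mpr ha, hb, hc]))

/-- given `(α_R, w, ς)` making `α_S(a+ξ𝛔)=α_R(a)+ξw+ξς𝛔` an algebra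
endomorphism of `R(σ,s)`, the map `δ_S(a + ξ𝛔) = δ_R(a) + ξe + ξμ𝛔` is an
`α_S`-skew derivation if and only if `ςμ = 0` and, for all `a ∈ R`,
(a) `δ_R(s) − μs = eσ + ς(σe) + we + μ(wσ) − e`,
(b) `δ_R(aσ) = δ_R(a)σ + α_R(a)e + μ(α_R(a)σ)`,
(c) `δ_R(σa) = wδ_R(a) + ς(σδ_R(a)) + ea + μ(σa)`. -/
theorem skew_derivation_extension_iff
    {F R : Type*} [Field F] [NonUnitalRing R] [Module F R]
    [SMulCommClass F R R] [IsScalarTower F R R]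
    (l r : R → R) (s : R)
    (hladd : ∀ a b, l (a + b) = l a + l b)
    (hlsmul : ∀ (c : F) a, l (c • a) = c • l a)
    (hradd : ∀ a b, r (a + b) = r a + r b)
    (hrsmul : ∀ (c : F) a, r (c • a) = c • r a)
    (hbm1 : ∀ a b, r (a * b) = r a * b)
    (hbm2 : ∀ a b, l (a * b) = a * l b)
    (hbm3 : ∀ a b, a * r b = l a * b)
    (hdh : ∀ a, r (l a) = l (r a))
    (hs : r s = l s)
    (hsq1 : ∀ a, r (r a) = r a + s * a)
    (hsq2 : ∀ a, l (l a) = l a + a * s)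
    (αR : R → R)
    (hαadd : ∀ a b, αR (a + b) = αR a + αR b)
    (hαsmul : ∀ (c : F) a, αR (c • a) = c • αR a)
    (hαmul : ∀ a b, αR (a * b) = αR a * αR b)
    (w : R) (ς : F)
    (hς : ς = 0 ∨ ς = 1)
    (hi : αR s - ς • s = w * w + ς • l w + ς • r w - w)
    (hii : ∀ a : R, αR (l a) = αR a * w + ς • l (αR a))
    (hiii : ∀ a : R, αR (r a) = w * αR a + ς • r (αR a))
    (δR : R → R)
    (hδadd : ∀ a b, δR (a + b) = δR a + δR b)
    (hδsmul : ∀ (c : F) a, δR (c • a) = c • δR a)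
    (hδ : ∀ a b, δR (a * b) = δR a * b + αR a * δR b)
    (e : R) (μ : F) :
    (∀ x y : R × F,
        (fun z : R × F => ((δR z.1 + z.2 • e, z.2 * μ) : R × F)) (homMul l r s x y)
          = homMul l r s ((fun z : R × F => ((δR z.1 + z.2 • e, z.2 * μ) : R × F)) x) y
            + homMul l r s ((fun z : R × F => ((αR z.1 + z.2 • w, z.2 * ς) : R × F)) x)
                ((fun z : R × F => ((δR z.1 + z.2 • e, z.2 * μ) : R × F)) y))
      ↔ (ς * μ = 0 ∧
          (δR s - μ • s = l e + ς • r e + w * e + μ • l w - e) ∧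
          (∀ a : R, δR (l a) = l (δR a) + αR a * e + μ • l (αR a)) ∧
          (∀ a : R, δR (r a) = w * δR a + ς • r (δR a) + e * a + μ • r a)) :=
  skew_derivation_extension_iff_general l r s hladd hlsmul hradd hrsmul αR w ς δR hδadd hδsmul hδ e
    μ
end

section
/- Let A be a non-degenerate associative algebra. Then every bimultiplication σ of A is automatically a double homothetism, i.e. σ(aσ) = (σa)σ for all a ∈ A. -/
/-! Both `σ(aσ)` and `(σa)σ` act on the right as `b ↦ (σa)(σb)`:
`σ(aσ) b = σ((aσ) b) = σ(a (σb)) = (σa)(σb)` and `(σa)σ b = (σa)(σb)`.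
Their difference therefore annihilates `A` from the left, so it vanishes. -/

theorem eq_of_forall_mul_eq_mul_of_left_nondegenerate {A : Type*} [NonUnitalNonAssocRing A]
    (hnd : ∀ a : A, (∀ b : A, a * b = 0) → a = 0) {x y : A} (h : ∀ b, x * b = y * b) :
    x = y :=
  sub_eq_zero.mp <| hnd _ fun b => by rw [sub_mul, h, sub_self]

theorem bimultiplication_comp_mul_eq {A : Type*} [Mul A] {l r : A → A}
    (hr : ∀ a b, r (a * b) = r a * b) (hlr : ∀ a b, a * r b = l a * b) (a b : A) :
    r (l a) * b = l (r a) * b :=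
  calc r (l a) * b = r (a * r b) := by rw [← hr, hlr]
    _ = l (r a) * b := by rw [hr, hlr]

theorem bimultiplication_is_double_homothetism_of_nondegenerate_general
    {A : Type*} [NonUnitalRing A]
    (hnd1 : ∀ a : A, (∀ b : A, a * b = 0) → a = 0)
    (l r : A → A)
    (hbm1 : ∀ a b, r (a * b) = r a * b)
    (hbm3 : ∀ a b, a * r b = l a * b) :
    ∀ a : A, r (l a) = l (r a) := fun a =>
  eq_of_forall_mul_eq_mul_of_left_nondegenerate hnd1 (bimultiplication_comp_mul_eq hbm1 hbm3 a)

/-- on a non-degenerate associative algebra, every bimultiplication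
`σ = (l, r)` (with `l a = aσ`, `r a = σa`) is automatically a double homothetism:
`σ(aσ) = (σa)σ`, i.e. `r (l a) = l (r a)` for all `a`. -/
theorem bimultiplication_is_double_homothetism_of_nondegenerate
    {A : Type*} [NonUnitalRing A]
    (hnd1 : ∀ a : A, (∀ b : A, a * b = 0) → a = 0)
    (hnd2 : ∀ a : A, (∀ b : A, b * a = 0) → a = 0)
    (l r : A → A)
    (hbm1 : ∀ a b, r (a * b) = r a * b)
    (hbm2 : ∀ a b, l (a * b) = a * l b)
    (hbm3 : ∀ a b, a * r b = l a * b) :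
    ∀ a : A, r (l a) = l (r a) :=
  bimultiplication_is_double_homothetism_of_nondegenerate_general hnd1 l r hbm1 hbm3
end

section
/- For n ≥ 3 and 2 ≤ k ≤ n−1, left and right multiplication by the matrix unit e_{kk} maps the algebra ℸ_n into itself, and the resulting pair of maps ε_k = (x ↦ x e_{kk}, x ↦ e_{kk} x) is an idempotent bimultiplication (multiplier) of ℸ_n which is not inner, i.e. there is no y ∈ ℸ_n with e_{kk}x = yx and x e_{kk} = xy for all x ∈ ℸ_n. -/
/-!
Since `e_{kk}` is diagonal, multiplying by it on either side only rescales rows or columns,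
so it preserves the support pattern of `ℸ_n`; the bimultiplication identities are associativity
and idempotency is `e_{kk}² = e_{kk}`. If `ε_k` were inner with `y ∈ ℸ_n`, then testing
`x e_{kk} = x y` at `x = e_{1k} ∈ ℸ_n` would give `y_{kk} = 1`, whereas every element of `ℸ_n`
vanishes at the interior diagonal position `(k, k)`.
-/

/-- Membership in the non-unital algebra `ℸ_n ⊂ M_n(F)` of matrices supported on the
first row and the last column. -/
def InDaleth {F : Type*} [Field F] {n : ℕ} (x : Matrix (Fin n) (Fin n) F) : Prop :=
  ∀ i j : Fin n, (i : ℕ) ≠ 0 → (j : ℕ) ≠ n - 1 → x i j = 0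

open Matrix

section

variable {F : Type*} [Field F] {n : ℕ}

theorem InDaleth.mul_diagonal {x : Matrix (Fin n) (Fin n) F} (hx : InDaleth x) (d : Fin n → F) :
    InDaleth (x * diagonal d) := by
  intro i j hi hj
  rw [Matrix.mul_diagonal, hx i j hi hj, zero_mul]

theorem InDaleth.diagonal_mul {x : Matrix (Fin n) (Fin n) F} (hx : InDaleth x) (d : Fin n → F) :
    InDaleth (diagonal d * x) := by
  intro i j hi hj
  rw [Matrix.diagonal_mul, hx i j hi hj, mul_zero]

theorem inDaleth_single_of_row_eq_zero {i : Fin n} (hi : (i : ℕ) = 0) (j : Fin n) (c : F) :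
    InDaleth (single i j c) := by
  intro i' _ hi' _
  refine single_apply_of_row_ne ?_ _ _ _
  rintro rfl
  exact hi' hi

theorem not_exists_inDaleth_mul_single_eq_mul {k : Fin n} (hk0 : (k : ℕ) ≠ 0)
    (hk1 : (k : ℕ) ≠ n - 1) :
    ¬ ∃ y : Matrix (Fin n) (Fin n) F, InDaleth y ∧
        ∀ x : Matrix (Fin n) (Fin n) F, InDaleth x → x * single k k 1 = x * y := by
  rintro ⟨y, hy, h⟩
  let i₀ : Fin n := ⟨0, k.pos⟩
  have hx := h (single i₀ k 1) (inDaleth_single_of_row_eq_zero rfl k 1)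
  have hkk : (1 : F) = y k k := by
    simpa using congrFun₂ hx i₀ k
  exact one_ne_zero (hkk.trans (hy k k hk0 hk1))

end

-- `Fin n` is 0-indexed: the paper's `2 ≤ k ≤ n - 1` reads `k ≠ 0`, `k ≠ n - 1` here.
theorem epsilon_k_noninner_idempotent_multiplier_general
    {F : Type*} [Field F] (n : ℕ) (k : Fin n)
    (hk0 : (k : ℕ) ≠ 0) (hk1 : (k : ℕ) ≠ n - 1) :
    (∀ x : Matrix (Fin n) (Fin n) F, InDaleth x →
        InDaleth (x * Matrix.single k k (1 : F)) ∧
        InDaleth (Matrix.single k k (1 : F) * x)) ∧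
    (∀ x y : Matrix (Fin n) (Fin n) F, InDaleth x → InDaleth y →
        Matrix.single k k (1 : F) * (x * y)
          = (Matrix.single k k (1 : F) * x) * y ∧
        (x * y) * Matrix.single k k (1 : F)
          = x * (y * Matrix.single k k (1 : F)) ∧
        x * (Matrix.single k k (1 : F) * y)
          = (x * Matrix.single k k (1 : F)) * y) ∧
    (∀ x : Matrix (Fin n) (Fin n) F, InDaleth x →
        (x * Matrix.single k k (1 : F)) * Matrix.single k k (1 : F)
          = x * Matrix.single k k (1 : F) ∧
        Matrix.single k k (1 : F) * (Matrix.single k k (1 : F) * x)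
          = Matrix.single k k (1 : F) * x) ∧
    ¬ ∃ y : Matrix (Fin n) (Fin n) F, InDaleth y ∧
        ∀ x : Matrix (Fin n) (Fin n) F, InDaleth x →
          Matrix.single k k (1 : F) * x = y * x ∧
          x * Matrix.single k k (1 : F) = x * y := by
  have he : IsIdempotentElem (single k k (1 : F)) := by
    rw [IsIdempotentElem, single_mul_single_same, one_mul]
  refine ⟨fun x hx => ?_, fun x y _ _ => ?_, fun x _ => ?_, ?_⟩
  · rw [← diagonal_single]
    exact ⟨hx.mul_diagonal _, hx.diagonal_mul _⟩
  · exact ⟨(mul_assoc _ _ _).symm, mul_assoc _ _ _, (mul_assoc _ _ _).symm⟩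
  · exact ⟨by rw [mul_assoc, he.eq], by rw [← mul_assoc, he.eq]⟩
  · rintro ⟨y, hy, h⟩
    exact not_exists_inDaleth_mul_single_eq_mul hk0 hk1 ⟨y, hy, fun x hx => (h x hx).2⟩

/-- for `n ≥ 3` and `2 ≤ k ≤ n−1` (i.e. `k ≠ 0` and `k ≠ n-1` in
0-indexed terms), left and right multiplication by `e_{kk}` map `ℸ_n` into itself and
yield an idempotent bimultiplication `ε_k` of `ℸ_n` which is not inner. -/
theorem epsilon_k_noninner_idempotent_multiplier
    {F : Type*} [Field F] (n : ℕ) (hn : 3 ≤ n) (k : Fin n)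
    (hk0 : (k : ℕ) ≠ 0) (hk1 : (k : ℕ) ≠ n - 1) :
    (∀ x : Matrix (Fin n) (Fin n) F, InDaleth x →
        InDaleth (x * Matrix.single k k (1 : F)) ∧
        InDaleth (Matrix.single k k (1 : F) * x)) ∧
    (∀ x y : Matrix (Fin n) (Fin n) F, InDaleth x → InDaleth y →
        Matrix.single k k (1 : F) * (x * y)
          = (Matrix.single k k (1 : F) * x) * y ∧
        (x * y) * Matrix.single k k (1 : F)
          = x * (y * Matrix.single k k (1 : F)) ∧
        x * (Matrix.single k k (1 : F) * y)
          = (x * Matrix.single k k (1 : F)) * y) ∧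
    (∀ x : Matrix (Fin n) (Fin n) F, InDaleth x →
        (x * Matrix.single k k (1 : F)) * Matrix.single k k (1 : F)
          = x * Matrix.single k k (1 : F) ∧
        Matrix.single k k (1 : F) * (Matrix.single k k (1 : F) * x)
          = Matrix.single k k (1 : F) * x) ∧
    ¬ ∃ y : Matrix (Fin n) (Fin n) F, InDaleth y ∧
        ∀ x : Matrix (Fin n) (Fin n) F, InDaleth x →
          Matrix.single k k (1 : F) * x = y * x ∧
          x * Matrix.single k k (1 : F) = x * y :=
  epsilon_k_noninner_idempotent_multiplier_general n k hk0 hk1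
end

section
/- For n ≥ 3 and 2 ≤ k ≤ n−1, with ε_k the bimultiplication of ℸ_n given by multiplication by e_{kk}, the pair (ε_k, 0) is a homothetic datum, and the map ℸ_n(ε_k, 0) → M_n(F), x + ξ𝛔 ↦ x + ξ e_{kk}, is an injective algebra homomorphism whose image is the subalgebra ℸ_n ⊕ F e_{kk} of M_n(F). -/
/-- The multiplication of the homothetic extension `ℸ_n(ε_k, 0)`:
`(x + ξ𝛔)(y + ζ𝛔) = xy + ζ(x ε_k) + ξ(ε_k y) + ξζ𝛔` with `s = 0`. -/
def daleethExtMul {F : Type*} [Field F] {n : ℕ} (E : Matrix (Fin n) (Fin n) F)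
    (p q : Matrix (Fin n) (Fin n) F × F) : Matrix (Fin n) (Fin n) F × F :=
  (p.1 * q.1 + q.2 • (p.1 * E) + p.2 • (E * q.1), p.2 * q.2)

open Matrix

theorem IsIdempotentElem.add_smul_mul_add_smul {R A : Type*} [CommSemiring R] [Semiring A]
    [Algebra R A] {e : A} (he : IsIdempotentElem e) (x y : A) (ξ ζ : R) :
    (x + ξ • e) * (y + ζ • e) = (x * y + ζ • (x * e) + ξ • (e * y)) + (ξ * ζ) • e := by
  simp only [add_mul, mul_add, smul_mul_assoc, mul_smul_comm, he.eq]
  module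

theorem Matrix.add_smul_single_same_inj {ι α : Type*} [DecidableEq ι] [Ring α]
    {x y : Matrix ι ι α} {k : ι} (hx : x k k = 0) (hy : y k k = 0) {ξ ζ : α} :
    x + ξ • single k k 1 = y + ζ • single k k 1 ↔ x = y ∧ ξ = ζ := by
  refine ⟨fun h ↦ ?_, fun ⟨hxy, hξζ⟩ ↦ hxy ▸ hξζ ▸ rfl⟩
  have hξζ : ξ = ζ := by
    simpa [hx, hy] using congrFun (congrFun h k) k
  subst hξζ
  exact ⟨add_right_cancel h, rfl⟩

namespace InDaleth

variable {F : Type*} [Field F] {n : ℕ} {x y : Matrix (Fin n) (Fin n) F}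

theorem add (hx : InDaleth x) (hy : InDaleth y) : InDaleth (x + y) := fun i j hi hj ↦ by
  simp [hx i j hi hj, hy i j hi hj]

theorem smul (c : F) (hx : InDaleth x) : InDaleth (c • x) := fun i j hi hj ↦ by
  simp [hx i j hi hj]

theorem mul (hx : InDaleth x) (hy : InDaleth y) : InDaleth (x * y) := fun i j hi hj ↦ by
  rw [mul_apply]
  refine Finset.sum_eq_zero fun l _ ↦ ?_
  by_cases hl : (l : ℕ) = n - 1
  -- `i ≠ 0` forces `n ≥ 2`, so the last index `l` is not `0`
  · rw [hy l j (by omega) hj, mul_zero]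
  · rw [hx i l hi hl, zero_mul]

theorem mul_single {k l : Fin n} (hk : (k : ℕ) ≠ n - 1) (c : F) (hx : InDaleth x) :
    InDaleth (x * single k l c) := fun i j hi hj ↦ by
  by_cases hjl : j = l
  · rw [hjl, mul_single_apply_same, hx i k hi hk, zero_mul]
  · exact mul_single_apply_of_ne _ _ _ _ _ hjl _

theorem single_mul {k l : Fin n} (hl : (l : ℕ) ≠ 0) (c : F) (hx : InDaleth x) :
    InDaleth (single k l c * x) := fun i j hi hj ↦ by
  by_cases hik : i = k
  · rw [hik, single_mul_apply_same, hx l j hl hj, mul_zero]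
  · exact single_mul_apply_of_ne _ _ _ _ _ hik _

end InDaleth

theorem daleth_homothetic_extension_embeds_general
    {F : Type*} [Field F] (n : ℕ) (k : Fin n)
    (hk0 : (k : ℕ) ≠ 0) (hk1 : (k : ℕ) ≠ n - 1) :
    -- `(ε_k, 0)` is a homothetic datum: double homothetism and `ε_k² = ε_k`
    (∀ x : Matrix (Fin n) (Fin n) F, InDaleth x →
        Matrix.single k k (1 : F) * (x * Matrix.single k k (1 : F))
          = (Matrix.single k k (1 : F) * x) * Matrix.single k k (1 : F) ∧
        (x * Matrix.single k k (1 : F)) * Matrix.single k k (1 : F)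
          = x * Matrix.single k k (1 : F) ∧
        Matrix.single k k (1 : F) * (Matrix.single k k (1 : F) * x)
          = Matrix.single k k (1 : F) * x) ∧
    -- the map `φ(x,ξ) = x + ξ e_{kk}` is additive and multiplicative on `ℸ_n(ε_k,0)`
    (∀ p q : Matrix (Fin n) (Fin n) F × F,
        (p + q).1 + (p + q).2 • Matrix.single k k (1 : F)
          = (p.1 + p.2 • Matrix.single k k (1 : F))
            + (q.1 + q.2 • Matrix.single k k (1 : F))) ∧
    (∀ p q : Matrix (Fin n) (Fin n) F × F, InDaleth p.1 → InDaleth q.1 →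
        (daleethExtMul (Matrix.single k k (1 : F)) p q).1
            + (daleethExtMul (Matrix.single k k (1 : F)) p q).2
              • Matrix.single k k (1 : F)
          = (p.1 + p.2 • Matrix.single k k (1 : F))
            * (q.1 + q.2 • Matrix.single k k (1 : F))) ∧
    -- injectivity on `ℸ_n(ε_k,0)`
    (∀ p q : Matrix (Fin n) (Fin n) F × F, InDaleth p.1 → InDaleth q.1 →
        p.1 + p.2 • Matrix.single k k (1 : F)
          = q.1 + q.2 • Matrix.single k k (1 : F) → p = q) ∧
    -- the image is the subalgebra `ℸ_n ⊕ F e_{kk}`, closed under multiplication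
    (∀ m : Matrix (Fin n) (Fin n) F,
        (∃ p : Matrix (Fin n) (Fin n) F × F, InDaleth p.1 ∧
            p.1 + p.2 • Matrix.single k k (1 : F) = m)
          ↔ ∃ (x : Matrix (Fin n) (Fin n) F) (ξ : F), InDaleth x ∧ m = x + ξ • Matrix.single k k (1 : F)) ∧
    (∀ m₁ m₂ : Matrix (Fin n) (Fin n) F,
        (∃ (x : Matrix (Fin n) (Fin n) F) (ξ : F), InDaleth x ∧ m₁ = x + ξ • Matrix.single k k (1 : F)) →
        (∃ (x : Matrix (Fin n) (Fin n) F) (ξ : F), InDaleth x ∧ m₂ = x + ξ • Matrix.single k k (1 : F)) →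
        ∃ (x : Matrix (Fin n) (Fin n) F) (ξ : F), InDaleth x ∧ m₁ * m₂ = x + ξ • Matrix.single k k (1 : F)) := by
  have hE : IsIdempotentElem (single k k (1 : F)) := by
    rw [IsIdempotentElem, single_mul_single_same, one_mul]
  refine ⟨fun x _ ↦ ⟨(mul_assoc _ _ _).symm, hE.mul_mul_self x, hE.mul_self_mul x⟩,
    fun p q ↦ ?_, fun p q _ _ ↦ (hE.add_smul_mul_add_smul p.1 q.1 p.2 q.2).symm,
    fun p q hp hq h ↦ ?_, fun m ↦ ?_, ?_⟩
  · simp only [Prod.fst_add, Prod.snd_add, add_smul]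
    abel
  · obtain ⟨h1, h2⟩ := (add_smul_single_same_inj (hp k k hk0 hk1) (hq k k hk0 hk1)).mp h
    exact Prod.ext h1 h2
  · exact ⟨fun ⟨p, hp, h⟩ ↦ ⟨p.1, p.2, hp, h.symm⟩, fun ⟨x, ξ, hx, h⟩ ↦ ⟨(x, ξ), hx, h.symm⟩⟩
  · rintro _ _ ⟨x, ξ, hx, rfl⟩ ⟨y, ζ, hy, rfl⟩
    exact ⟨_, ξ * ζ, ((hx.mul hy).add ((hx.mul_single hk1 1).smul ζ)).add
      ((hy.single_mul hk0 1).smul ξ), hE.add_smul_mul_add_smul x y ξ ζ⟩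

/-- `(ε_k, 0)` is a homothetic datum on `ℸ_n`, and
`x + ξ𝛔 ↦ x + ξ e_{kk}` is an injective algebra homomorphism
`ℸ_n(ε_k, 0) → M_n(F)` with image the subalgebra `ℸ_n ⊕ F e_{kk}`. -/
theorem daleth_homothetic_extension_embeds
    {F : Type*} [Field F] (n : ℕ) (hn : 3 ≤ n) (k : Fin n)
    (hk0 : (k : ℕ) ≠ 0) (hk1 : (k : ℕ) ≠ n - 1) :
    -- `(ε_k, 0)` is a homothetic datum: double homothetism and `ε_k² = ε_k`
    (∀ x : Matrix (Fin n) (Fin n) F, InDaleth x →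
        Matrix.single k k (1 : F) * (x * Matrix.single k k (1 : F))
          = (Matrix.single k k (1 : F) * x) * Matrix.single k k (1 : F) ∧
        (x * Matrix.single k k (1 : F)) * Matrix.single k k (1 : F)
          = x * Matrix.single k k (1 : F) ∧
        Matrix.single k k (1 : F) * (Matrix.single k k (1 : F) * x)
          = Matrix.single k k (1 : F) * x) ∧
    -- the map `φ(x,ξ) = x + ξ e_{kk}` is additive and multiplicative on `ℸ_n(ε_k,0)`
    (∀ p q : Matrix (Fin n) (Fin n) F × F,
        (p + q).1 + (p + q).2 • Matrix.single k k (1 : F)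
          = (p.1 + p.2 • Matrix.single k k (1 : F))
            + (q.1 + q.2 • Matrix.single k k (1 : F))) ∧
    (∀ p q : Matrix (Fin n) (Fin n) F × F, InDaleth p.1 → InDaleth q.1 →
        (daleethExtMul (Matrix.single k k (1 : F)) p q).1
            + (daleethExtMul (Matrix.single k k (1 : F)) p q).2
              • Matrix.single k k (1 : F)
          = (p.1 + p.2 • Matrix.single k k (1 : F))
            * (q.1 + q.2 • Matrix.single k k (1 : F))) ∧
    -- injectivity on `ℸ_n(ε_k,0)`
    (∀ p q : Matrix (Fin n) (Fin n) F × F, InDaleth p.1 → InDaleth q.1 →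
        p.1 + p.2 • Matrix.single k k (1 : F)
          = q.1 + q.2 • Matrix.single k k (1 : F) → p = q) ∧
    -- the image is the subalgebra `ℸ_n ⊕ F e_{kk}`, closed under multiplication
    (∀ m : Matrix (Fin n) (Fin n) F,
        (∃ p : Matrix (Fin n) (Fin n) F × F, InDaleth p.1 ∧
            p.1 + p.2 • Matrix.single k k (1 : F) = m)
          ↔ ∃ (x : Matrix (Fin n) (Fin n) F) (ξ : F), InDaleth x ∧ m = x + ξ • Matrix.single k k (1 : F)) ∧
    (∀ m₁ m₂ : Matrix (Fin n) (Fin n) F,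
        (∃ (x : Matrix (Fin n) (Fin n) F) (ξ : F), InDaleth x ∧ m₁ = x + ξ • Matrix.single k k (1 : F)) →
        (∃ (x : Matrix (Fin n) (Fin n) F) (ξ : F), InDaleth x ∧ m₂ = x + ξ • Matrix.single k k (1 : F)) →
        ∃ (x : Matrix (Fin n) (Fin n) F) (ξ : F), InDaleth x ∧ m₁ * m₂ = x + ξ • Matrix.single k k (1 : F)) :=
  daleth_homothetic_extension_embeds_general n k hk0 hk1
end

section
/- Let (σ,s) be a homothetic datum on R and (α_R, w; δ_R, e) a compatible skew derivation of type 1 (i.e. ς = 1, μ = 0), with extensions α_S, δ_S to S = R(σ,s) given by α_S(a+ξ𝛔) = α_R(a)+ξw+ξ𝛔 and δ_S(a+ξ𝛔) = δ_R(a)+ξe. Then the maps ι' : R[x;α_R,δ_R] → R(σ,s)[x;α_S,δ_S], a x^n ↦ a x^n, and π' : R(σ,s)[x;α_S,δ_S] → F[x], (a+ζ𝛔)x^n ↦ ζ x^n, are algebra homomorphisms, ι' is injective, π' is surjective, and ker π' = im ι'; i.e. 0 → R[x;α_R,δ_R] → R(σ,s)[x;α_S,δ_S] → F[x] → 0 is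 a short exact sequence of algebras. -/
/-!
Both maps act coefficientwise through additive maps, `a ↦ (a, 0)` and `(a, ζ) ↦ ζ`, which
intertwine the multiplications, the endomorphisms and the skew derivations; the Ore product is
natural in such maps because `Γ[α,δ]` is built from `α` and `δ` by composition and addition.
On the `𝛔`-coordinate `α_S` acts as the identity and `δ_S` as zero, so there `Γ^m_i` is the
identity for `i = m` and zero otherwise, and the Ore product becomes the polynomial product.
Exactness is then read off coefficientwise.
-/

/-- `Γ[α,δ]^m_i`: the sum of all composites of `i` copies of `α` and `m − i` copies
of `δ`. -/
def gam {S : Type*} [AddCommMonoid S] (α δ : S → S) : ℕ → ℕ → S → S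
  | 0, 0 => id
  | 0, _ + 1 => fun _ => 0
  | m + 1, 0 => fun a => δ (gam α δ m 0 a)
  | m + 1, i + 1 => fun a => α (gam α δ m i a) + δ (gam α δ m (i + 1) a)

/-- The Ore extension multiplication on `ℕ →₀ S`, for a multiplication `mul` on `S`. -/
noncomputable def oreMul {S : Type*} [AddCommMonoid S] (mul : S → S → S) (α δ : S → S)
    (p q : ℕ →₀ S) : ℕ →₀ S :=
  p.sum fun m a => q.sum fun n b =>
    (Finset.range (m + 1)).sum fun i => Finsupp.single (n + i) (mul a (gam α δ m i b))

/-- The inclusion `ι' : R[x;α_R,δ_R] → R(σ,s)[x;α_S,δ_S]`, `a x^n ↦ a x^n`. -/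
noncomputable def oreIota {F R : Type*} [CommRing F] [NonUnitalRing R]
    (p : ℕ →₀ R) : ℕ →₀ (R × F) :=
  Finsupp.mapRange (fun a : R => ((a, (0 : F)) : R × F)) rfl p

/-- The projection `π' : R(σ,s)[x;α_S,δ_S] → F[x]`, `(a + ζ𝛔)x^n ↦ ζ x^n`. -/
noncomputable def orePi {F R : Type*} [CommRing F] [NonUnitalRing R]
    (p : ℕ →₀ (R × F)) : Polynomial F :=
  p.sum fun n c => Polynomial.monomial n c.2

section OreExtension

variable {S T : Type*} [AddCommMonoid S] [AddCommMonoid T]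

theorem map_gam (φ : S →+ T) {α δ : S → S} {α' δ' : T → T}
    (hα : ∀ a, φ (α a) = α' (φ a)) (hδ : ∀ a, φ (δ a) = δ' (φ a)) :
    ∀ m i a, φ (gam α δ m i a) = gam α' δ' m i (φ a)
  | 0, 0, _ => rfl
  | 0, _ + 1, _ => map_zero φ
  | m + 1, 0, a => by simp only [gam, hδ, map_gam φ hα hδ m 0 a]
  | m + 1, i + 1, a => by simp only [gam, map_add, hα, hδ, map_gam φ hα hδ m]

theorem gam_id_zero : ∀ (m i : ℕ) (a : S), gam id (fun _ => 0) m i a = if i = m then a else 0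
  | 0, 0, _ => rfl
  | 0, _ + 1, _ => rfl
  | m + 1, 0, a => rfl
  | m + 1, i + 1, a => by
      simp only [gam, gam_id_zero m, id, add_zero, add_left_inj]

theorem gam_apply_zero {α δ : S → S} (hα : α 0 = 0) (hδ : δ 0 = 0) :
    ∀ m i, gam α δ m i 0 = 0
  | 0, 0 => rfl
  | 0, _ + 1 => rfl
  | m + 1, 0 => by simp only [gam, gam_apply_zero hα hδ m, hδ]
  | m + 1, i + 1 => by simp only [gam, gam_apply_zero hα hδ m, hα, hδ, add_zero]

theorem mapRange_oreMul (φ : S →+ T) {mul : S → S → S} {mul' : T → T → T}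
    {α δ : S → S} {α' δ' : T → T}
    (hmul : ∀ a b, φ (mul a b) = mul' (φ a) (φ b))
    (hα : ∀ a, φ (α a) = α' (φ a)) (hδ : ∀ a, φ (δ a) = δ' (φ a))
    (hmul_zero_left : ∀ b, mul' 0 b = 0) (hmul_zero_right : ∀ a, mul' a 0 = 0)
    (hα₀ : α' 0 = 0) (hδ₀ : δ' 0 = 0) (p q : ℕ →₀ S) :
    Finsupp.mapRange φ φ.map_zero (oreMul mul α δ p q)
      = oreMul mul' α' δ' (Finsupp.mapRange φ φ.map_zero p)
          (Finsupp.mapRange φ φ.map_zero q) := by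
  rw [← Finsupp.mapRange.addMonoidHom_apply]
  simp only [oreMul, map_finsuppSum, map_sum, Finsupp.mapRange.addMonoidHom_apply,
    Finsupp.mapRange_single, hmul, map_gam φ hα hδ]
  rw [Finsupp.sum_mapRange_index fun m => by simp [hmul_zero_left]]
  refine Finsupp.sum_congr fun m _ => ?_
  rw [Finsupp.sum_mapRange_index fun n => by simp [gam_apply_zero hα₀ hδ₀, hmul_zero_right]]

theorem sum_monomial_oreMul {F : Type*} [CommSemiring F] (g : S →+ F) {mul : S → S → S}
    {α δ : S → S} (hmul : ∀ a b, g (mul a b) = g a * g b)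
    (hα : ∀ a, g (α a) = g a) (hδ : ∀ a, g (δ a) = 0) (p q : ℕ →₀ S) :
    (oreMul mul α δ p q).sum (fun n c => Polynomial.monomial n (g c))
      = (p.sum fun n c => Polynomial.monomial n (g c))
          * q.sum fun n c => Polynomial.monomial n (g c) := by
  have hgam : ∀ m i b, g (gam α δ m i b) = if i = m then g b else 0 := fun m i b =>
    (map_gam g (α' := id) (δ' := fun _ => 0) hα hδ m i b).trans (gam_id_zero m i (g b))
  set Ψ : (ℕ →₀ S) →+ Polynomial F :=
    Finsupp.liftAddHom fun n => (Polynomial.monomial n).toAddMonoidHom.comp g with hΨ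
  have hΨ_single : ∀ k v, Ψ (Finsupp.single k v) = Polynomial.monomial k (g v) := fun k v =>
    Finsupp.liftAddHom_apply_single _ k v
  have hΨ_apply : ∀ r : ℕ →₀ S, r.sum (fun n c => Polynomial.monomial n (g c)) = Ψ r :=
    fun r => by rw [hΨ, Finsupp.liftAddHom_apply]; rfl
  clear_value Ψ
  rw [hΨ_apply, hΨ_apply, hΨ_apply]
  calc Ψ (oreMul mul α δ p q)
      = p.sum fun m a => q.sum fun n b => Polynomial.monomial (n + m) (g a * g b) := by
        simp only [oreMul, map_finsuppSum, map_sum, hΨ_single, hmul, hgam, mul_ite, mul_zero,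
          apply_ite (Polynomial.monomial _), map_zero, Finset.sum_ite_eq', Finset.mem_range,
          Nat.lt_add_one, if_true]
    _ = Ψ p * Ψ q := by
        simp only [← hΨ_apply, Finsupp.sum]
        rw [Finset.sum_mul]
        refine Finset.sum_congr rfl fun m _ => ?_
        rw [Finset.mul_sum]
        refine Finset.sum_congr rfl fun n _ => ?_
        rw [Polynomial.monomial_mul_monomial, add_comm]

end OreExtension

section Homothetic

variable {F R : Type*} [CommRing F] [NonUnitalRing R]

theorem oreIota_eq_mapRange (p : ℕ →₀ R) :
    oreIota (F := F) p = Finsupp.mapRange (AddMonoidHom.inl R F) (map_zero _) p :=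
  rfl

theorem oreIota_add (p q : ℕ →₀ R) : oreIota (F := F) (p + q) = oreIota p + oreIota q :=
  Finsupp.mapRange_add (map_add (AddMonoidHom.inl R F)) p q

theorem oreIota_injective : Function.Injective (oreIota (F := F) (R := R)) :=
  Finsupp.mapRange_injective (fun a : R => ((a, 0) : R × F)) rfl (Prod.mk_left_injective 0)

theorem oreIota_oreMul [Module F R] {l r : R → R} (s : R) {αR δR : R → R} (w e : R)
    (hl : l 0 = 0) (hr : r 0 = 0) (hα : αR 0 = 0) (hδ : δR 0 = 0) (p q : ℕ →₀ R) :
    oreIota (F := F) (oreMul (· * ·) αR δR p q)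
      = oreMul (homMul l r s)
          (fun z : R × F => (αR z.1 + z.2 • w, z.2))
          (fun z : R × F => (δR z.1 + z.2 • e, 0))
          (oreIota p) (oreIota q) := by
  simp only [oreIota_eq_mapRange]
  refine mapRange_oreMul _ (fun a b => ?_) (fun a => ?_) (fun a => ?_) (fun b => ?_) (fun a => ?_)
    ?_ ?_ p q <;> simp [homMul, hl, hr, hα, hδ]

theorem orePi_add (p q : ℕ →₀ R × F) : orePi (p + q) = orePi p + orePi q :=
  Finsupp.sum_add_index' (fun _ => map_zero _) (fun _ _ _ => map_add _ _ _)

theorem orePi_single (n : ℕ) (c : R × F) :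
    orePi (Finsupp.single n c) = Polynomial.monomial n c.2 :=
  Finsupp.sum_single_index (map_zero _)

theorem coeff_orePi (p : ℕ →₀ R × F) (k : ℕ) : (orePi p).coeff k = (p k).2 := by
  induction p using Finsupp.induction_linear with
  | zero => simp [orePi]
  | add p q hp hq => simp [orePi_add, hp, hq]
  | single n c =>
    rw [orePi_single, Polynomial.coeff_monomial, Finsupp.single_apply]
    split_ifs <;> rfl

theorem orePi_oreMul [Module F R] (l r : R → R) (s : R) (αR δR : R → R) (w e : R)
    (p q : ℕ →₀ R × F) :
    orePi (oreMul (homMul l r s)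
        (fun z : R × F => (αR z.1 + z.2 • w, z.2))
        (fun z : R × F => (δR z.1 + z.2 • e, 0)) p q)
      = orePi p * orePi q := by
  unfold orePi
  exact sum_monomial_oreMul (AddMonoidHom.snd R F) (mul := homMul l r s)
    (α := fun z : R × F => (αR z.1 + z.2 • w, z.2))
    (δ := fun z : R × F => (δR z.1 + z.2 • e, 0))
    (fun _ _ => rfl) (fun _ => rfl) (fun _ => rfl) p q

theorem orePi_surjective : Function.Surjective (orePi (F := F) (R := R)) := by
  intro f
  refine ⟨f.toFinsupp.coeff.mapRange (AddMonoidHom.inr R F) (map_zero _), ?_⟩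
  ext k
  simp only [coeff_orePi, Finsupp.mapRange_apply, AddMonoidHom.inr_apply]
  rfl

theorem orePi_eq_zero_iff (p : ℕ →₀ R × F) :
    orePi p = 0 ↔ ∃ q : ℕ →₀ R, oreIota q = p := by
  constructor
  · intro hp
    refine ⟨p.mapRange Prod.fst rfl, Finsupp.ext fun n => Prod.ext rfl ?_⟩
    change 0 = (p n).2
    rw [← coeff_orePi, hp, Polynomial.coeff_zero]
  · rintro ⟨q, rfl⟩
    ext k
    simp [coeff_orePi, oreIota]

end Homothetic

theorem ore_homothetic_exact_sequence_general
    {F R : Type*} [CommRing F] [NonUnitalRing R] [Module F R]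
    (l r : R → R) (s : R)
    (hladd : ∀ a b, l (a + b) = l a + l b)
    (hradd : ∀ a b, r (a + b) = r a + r b)
    (αR δR : R → R) (w e : R)
    (hαadd : ∀ a b, αR (a + b) = αR a + αR b)
    (hδadd : ∀ a b, δR (a + b) = δR a + δR b) :
    -- `ι'` is an injective algebra homomorphism
    (∀ p q : ℕ →₀ R, oreIota (F := F) (p + q) = oreIota p + oreIota q) ∧
    (∀ p q : ℕ →₀ R,
        oreIota (F := F) (oreMul (· * ·) αR δR p q)
          = oreMul (homMul l r s)
              (fun z : R × F => (αR z.1 + z.2 • w, z.2))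
              (fun z : R × F => (δR z.1 + z.2 • e, 0))
              (oreIota p) (oreIota q)) ∧
    Function.Injective (oreIota (F := F) (R := R)) ∧
    -- `π'` is a surjective algebra homomorphism
    (∀ p q : ℕ →₀ (R × F), orePi (p + q) = orePi p + orePi q) ∧
    (∀ p q : ℕ →₀ (R × F),
        orePi (oreMul (homMul l r s)
            (fun z : R × F => (αR z.1 + z.2 • w, z.2))
            (fun z : R × F => (δR z.1 + z.2 • e, 0)) p q)
          = orePi p * orePi q) ∧
    Function.Surjective (orePi (F := F) (R := R)) ∧
    -- exactness: `ker π' = im ι'`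
    (∀ p : ℕ →₀ (R × F), orePi p = 0 ↔ ∃ q : ℕ →₀ R, oreIota q = p) := by
  have map_zero_of_add {f : R → R} (hf : ∀ a b, f (a + b) = f a + f b) : f 0 = 0 :=
    (AddMonoidHom.mk' f hf).map_zero
  exact ⟨oreIota_add,
    oreIota_oreMul s w e (map_zero_of_add hladd) (map_zero_of_add hradd)
      (map_zero_of_add hαadd) (map_zero_of_add hδadd),
    oreIota_injective, orePi_add, orePi_oreMul l r s αR δR w e, orePi_surjective,
    orePi_eq_zero_iff⟩

/-- for a homothetic datum `(σ,s)` on `R` and a compatible skew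
derivation `(α_R, w; δ_R, e)` of type 1 (`ς = 1`, `μ = 0`), with extension
`α_S(a+ξ𝛔) = α_R(a)+ξw+ξ𝛔`, `δ_S(a+ξ𝛔) = δ_R(a)+ξe`, the maps `ι'` and `π'`
form a short exact sequence of algebras
`0 → R[x;α_R,δ_R] → R(σ,s)[x;α_S,δ_S] → F[x] → 0`. -/
theorem ore_homothetic_exact_sequence
    {F R : Type*} [CommRing F] [NonUnitalRing R] [Module F R]
    [SMulCommClass F R R] [IsScalarTower F R R]
    (l r : R → R) (s : R)
    (hladd : ∀ a b, l (a + b) = l a + l b)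
    (hlsmul : ∀ (c : F) a, l (c • a) = c • l a)
    (hradd : ∀ a b, r (a + b) = r a + r b)
    (hrsmul : ∀ (c : F) a, r (c • a) = c • r a)
    (hbm1 : ∀ a b, r (a * b) = r a * b)
    (hbm2 : ∀ a b, l (a * b) = a * l b)
    (hbm3 : ∀ a b, a * r b = l a * b)
    (hdh : ∀ a, r (l a) = l (r a))
    (hs : r s = l s)
    (hsq1 : ∀ a, r (r a) = r a + s * a)
    (hsq2 : ∀ a, l (l a) = l a + a * s)
    (αR δR : R → R) (w e : R)
    (hαadd : ∀ a b, αR (a + b) = αR a + αR b)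
    (hαsmul : ∀ (c : F) a, αR (c • a) = c • αR a)
    (hαmul : ∀ a b, αR (a * b) = αR a * αR b)
    (hδadd : ∀ a b, δR (a + b) = δR a + δR b)
    (hδsmul : ∀ (c : F) a, δR (c • a) = c • δR a)
    (hδ : ∀ a b, δR (a * b) = δR a * b + αR a * δR b)
    (hi : αR s - s = w * w + l w + r w - w)
    (hii : ∀ a, αR (l a) = l (αR a) + αR a * w)
    (hiii : ∀ a, αR (r a) = r (αR a) + w * αR a)
    (ha : δR s = l e + r e + w * e - e)
    (hb : ∀ a, δR (l a) = l (δR a) + αR a * e)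
    (hc : ∀ a, δR (r a) = w * δR a + r (δR a) + e * a) :
    -- `ι'` is an injective algebra homomorphism
    (∀ p q : ℕ →₀ R, oreIota (F := F) (p + q) = oreIota p + oreIota q) ∧
    (∀ p q : ℕ →₀ R,
        oreIota (F := F) (oreMul (· * ·) αR δR p q)
          = oreMul (homMul l r s)
              (fun z : R × F => (αR z.1 + z.2 • w, z.2))
              (fun z : R × F => (δR z.1 + z.2 • e, 0))
              (oreIota p) (oreIota q)) ∧
    Function.Injective (oreIota (F := F) (R := R)) ∧
    -- `π'` is a surjective algebra homomorphism
    (∀ p q : ℕ →₀ (R × F), orePi (p + q) = orePi p + orePi q) ∧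
    (∀ p q : ℕ →₀ (R × F),
        orePi (oreMul (homMul l r s)
            (fun z : R × F => (αR z.1 + z.2 • w, z.2))
            (fun z : R × F => (δR z.1 + z.2 • e, 0)) p q)
          = orePi p * orePi q) ∧
    Function.Surjective (orePi (F := F) (R := R)) ∧
    -- exactness: `ker π' = im ι'`
    (∀ p : ℕ →₀ (R × F), orePi p = 0 ↔ ∃ q : ℕ →₀ R, oreIota q = p) :=
  ore_homothetic_exact_sequence_general l r s hladd hradd αR δR w e hαadd hδadd
end
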